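/- For μ₁, μ₂ ∈ ℝ, the KL divergence between the [0,∞)-truncated normals TN(μ₁,1;1) and TN(μ₂,1;1) equals log Φ(μ₂) − log Φ(μ₁) + (μ₁−μ₂)·φ(μ₁)/Φ(μ₁) + (1/2)(μ₁−μ₂)². -/

import Mathlib

/-!
On `[0, ∞)` the log density ratio of `TN(μ₁,1;1)` and `TN(μ₂,1;1)` is affine in `x`, namely
`(μ₁ - μ₂) x + (μ₂² - μ₁²)/2 + log Φ(μ₂) - log Φ(μ₁)`, so the divergence only involves the total
mass `1` and the mean `μ₁ + φ(μ₁)/Φ(μ₁)` of `TN(μ₁,1;1)`. The mean follows from `φ' = -x φ`, and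
the mass from the reflection `x ↦ μ - x`, which maps `[0, ∞)` onto `(-∞, μ]`.
-/

/-- standard normal pdf -/
noncomputable def gaussPdf (x : ℝ) : ℝ :=
  (Real.sqrt (2 * Real.pi))⁻¹ * Real.exp (-x ^ 2 / 2)

/-- standard normal cdf -/
noncomputable def gaussCdf (x : ℝ) : ℝ := ∫ t in Set.Iic x, gaussPdf t

/-- density of the normal distribution `N(μ,1)` truncated to `[0,∞)` -/
noncomputable def tnPdf (μ x : ℝ) : ℝ :=
  if 0 ≤ x then Real.exp (-(x - μ) ^ 2 / 2) / (Real.sqrt (2 * Real.pi) * gaussCdf μ) else 0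

/-- KL divergence `KL(TN(μ₁,1;1) ‖ TN(μ₂,1;1))` as the integral of the log density ratio -/
noncomputable def klTN (μ₁ μ₂ : ℝ) : ℝ :=
  ∫ x in Set.Ici (0 : ℝ), Real.log (tnPdf μ₁ x / tnPdf μ₂ x) * tnPdf μ₁ x

open MeasureTheory ProbabilityTheory Set Filter Real Topology

lemma gaussPdf_eq_gaussianPDFReal : gaussPdf = gaussianPDFReal 0 1 := by
  ext x
  simp [gaussPdf, gaussianPDFReal]

lemma gaussPdf_pos (x : ℝ) : 0 < gaussPdf x := by
  rw [gaussPdf_eq_gaussianPDFReal]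
  exact gaussianPDFReal_pos 0 1 x one_ne_zero

lemma gaussPdf_neg (x : ℝ) : gaussPdf (-x) = gaussPdf x := by
  simp [gaussPdf]

lemma integrable_gaussPdf : Integrable gaussPdf := by
  rw [gaussPdf_eq_gaussianPDFReal]
  exact integrable_gaussianPDFReal 0 1

lemma integrable_mul_gaussPdf : Integrable fun x ↦ x * gaussPdf x := by
  convert (integrable_mul_exp_neg_mul_sq (b := 1 / 2) (by norm_num)).const_mul
    (√(2 * π))⁻¹ using 2 with x
  simp only [gaussPdf]
  ring_nf

lemma hasDerivAt_gaussPdf (x : ℝ) : HasDerivAt gaussPdf (-x * gaussPdf x) x := by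
  have h : HasDerivAt (fun y : ℝ ↦ -y ^ 2 / 2) (-x) x :=
    ((hasDerivAt_pow 2 x).neg.div_const 2).congr_deriv (by norm_num [neg_div])
  exact ((h.exp).const_mul (√(2 * π))⁻¹).congr_deriv (by simp only [gaussPdf]; ring)

lemma tendsto_gaussPdf_atTop : Tendsto gaussPdf atTop (𝓝 0) := by
  have h : Tendsto (fun x : ℝ ↦ -x ^ 2 / 2) atTop atBot :=
    (tendsto_neg_atTop_atBot.comp (tendsto_pow_atTop two_ne_zero)).atBot_div_const two_pos
  have h := (tendsto_exp_atBot.comp h).const_mul (√(2 * π))⁻¹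
  rwa [mul_zero] at h

lemma gaussCdf_pos (x : ℝ) : 0 < gaussCdf x := by
  rw [gaussCdf, setIntegral_pos_iff_support_of_nonneg_ae
    (ae_of_all _ fun t ↦ (gaussPdf_pos t).le) integrable_gaussPdf.integrableOn,
    Function.support_eq_univ fun t ↦ (gaussPdf_pos t).ne', univ_inter, volume_Iic]
  exact ENNReal.zero_lt_top

lemma integral_Ici_gaussPdf_sub (a μ : ℝ) :
    ∫ x in Ici a, gaussPdf (x - μ) = gaussCdf (μ - a) := by
  have h := (volume.measurePreserving_sub_left μ).setIntegral_preimage_emb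
    (measurableEmbedding_subLeft μ) gaussPdf (Iic (μ - a))
  have hpre : (fun x ↦ μ - x) ⁻¹' Iic (μ - a) = Ici a := by
    ext x; simp
  rw [gaussCdf, ← h, hpre]
  refine setIntegral_congr_fun measurableSet_Ici fun x _ ↦ ?_
  rw [← gaussPdf_neg, neg_sub]

lemma integral_Ici_sub_mul_gaussPdf_sub (a μ : ℝ) :
    ∫ x in Ici a, (x - μ) * gaussPdf (x - μ) = gaussPdf (a - μ) := by
  have hderiv : ∀ x ∈ Ici a,
      HasDerivAt (fun y ↦ -gaussPdf (y - μ)) ((x - μ) * gaussPdf (x - μ)) x :=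
    fun x _ ↦ ((hasDerivAt_gaussPdf (x - μ)).comp_sub_const x μ).neg.congr_deriv (by ring)
  have hlim : Tendsto (fun y ↦ -gaussPdf (y - μ)) atTop (𝓝 0) := by
    simpa [sub_eq_add_neg] using
      (tendsto_gaussPdf_atTop.comp (tendsto_atTop_add_const_right _ (-μ) tendsto_id)).neg
  rw [integral_Ici_eq_integral_Ioi, integral_Ioi_of_hasDerivAt_of_tendsto' hderiv
    (integrable_mul_gaussPdf.comp_sub_right μ).integrableOn hlim, zero_sub, neg_neg]

lemma integrable_mul_gaussPdf_sub (μ : ℝ) : Integrable fun x ↦ x * gaussPdf (x - μ) := by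
  refine ((integrable_mul_gaussPdf.comp_sub_right μ).add
    ((integrable_gaussPdf.comp_sub_right μ).const_mul μ)).congr (ae_of_all _ fun x ↦ ?_)
  simp only [Pi.add_apply]
  ring

lemma integral_Ici_mul_gaussPdf_sub (a μ : ℝ) :
    ∫ x in Ici a, x * gaussPdf (x - μ) = gaussPdf (a - μ) + μ * gaussCdf (μ - a) := by
  have hsplit : ∀ x, x * gaussPdf (x - μ) = (x - μ) * gaussPdf (x - μ) + μ * gaussPdf (x - μ) :=
    fun x ↦ by ring
  simp_rw [hsplit]
  rw [integral_add (integrable_mul_gaussPdf.comp_sub_right μ).integrableOn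
    ((integrable_gaussPdf.comp_sub_right μ).const_mul μ).integrableOn, integral_const_mul,
    integral_Ici_sub_mul_gaussPdf_sub, integral_Ici_gaussPdf_sub]

lemma tnPdf_of_nonneg {μ x : ℝ} (hx : 0 ≤ x) : tnPdf μ x = gaussPdf (x - μ) / gaussCdf μ := by
  rw [tnPdf, if_pos hx, gaussPdf]
  ring

lemma integrableOn_tnPdf (μ : ℝ) : IntegrableOn (tnPdf μ) (Ici 0) :=
  ((integrable_gaussPdf.comp_sub_right μ).div_const (gaussCdf μ)).integrableOn.congr_fun
    (fun _ hx ↦ (tnPdf_of_nonneg hx).symm) measurableSet_Ici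

lemma integrableOn_mul_tnPdf (μ : ℝ) : IntegrableOn (fun x ↦ x * tnPdf μ x) (Ici 0) :=
  ((integrable_mul_gaussPdf_sub μ).div_const (gaussCdf μ)).integrableOn.congr_fun
    (fun x hx ↦ by simp only [tnPdf_of_nonneg hx, mul_div_assoc]) measurableSet_Ici

lemma integral_tnPdf (μ : ℝ) : ∫ x in Ici 0, tnPdf μ x = 1 := by
  rw [setIntegral_congr_fun measurableSet_Ici fun _ hx ↦ tnPdf_of_nonneg hx, integral_div,
    integral_Ici_gaussPdf_sub, sub_zero, div_self (gaussCdf_pos μ).ne']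

lemma integral_mul_tnPdf (μ : ℝ) :
    ∫ x in Ici 0, x * tnPdf μ x = μ + gaussPdf μ / gaussCdf μ := by
  rw [setIntegral_congr_fun measurableSet_Ici fun x hx ↦ by
      rw [tnPdf_of_nonneg hx, ← mul_div_assoc],
    integral_div, integral_Ici_mul_gaussPdf_sub, sub_zero, zero_sub, gaussPdf_neg,
    add_div, mul_div_cancel_right₀ _ (gaussCdf_pos μ).ne', add_comm]

lemma log_tnPdf_div_tnPdf {μ₁ μ₂ x : ℝ} (hx : 0 ≤ x) :
    log (tnPdf μ₁ x / tnPdf μ₂ x) =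
      (μ₁ - μ₂) * x + (μ₂ ^ 2 - μ₁ ^ 2) / 2 + log (gaussCdf μ₂) - log (gaussCdf μ₁) := by
  have hΦ₁ := (gaussCdf_pos μ₁).ne'
  have hΦ₂ := (gaussCdf_pos μ₂).ne'
  have hratio : tnPdf μ₁ x / tnPdf μ₂ x =
      exp ((μ₁ - μ₂) * x + (μ₂ ^ 2 - μ₁ ^ 2) / 2) * gaussCdf μ₂ / gaussCdf μ₁ := by
    rw [tnPdf, tnPdf, if_pos hx, if_pos hx, show -(x - μ₁) ^ 2 / 2 =
      (μ₁ - μ₂) * x + (μ₂ ^ 2 - μ₁ ^ 2) / 2 + -(x - μ₂) ^ 2 / 2 by ring, exp_add]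
    field_simp
  rw [hratio, log_div (mul_ne_zero (exp_pos _).ne' hΦ₂) hΦ₁, log_mul (exp_pos _).ne' hΦ₂, log_exp]

theorem stmt3 (μ₁ μ₂ : ℝ) :
    klTN μ₁ μ₂ =
      Real.log (gaussCdf μ₂) - Real.log (gaussCdf μ₁)
        + (μ₁ - μ₂) * gaussPdf μ₁ / gaussCdf μ₁ + (1 / 2) * (μ₁ - μ₂) ^ 2 := by
  set B := (μ₂ ^ 2 - μ₁ ^ 2) / 2 + log (gaussCdf μ₂) - log (gaussCdf μ₁)
  have haffine : ∀ x ∈ Ici (0 : ℝ), log (tnPdf μ₁ x / tnPdf μ₂ x) * tnPdf μ₁ x =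
      (μ₁ - μ₂) * (x * tnPdf μ₁ x) + B * tnPdf μ₁ x := fun x hx ↦ by
    rw [log_tnPdf_div_tnPdf hx]
    ring
  rw [klTN, setIntegral_congr_fun measurableSet_Ici haffine,
    integral_add ((integrableOn_mul_tnPdf μ₁).const_mul _) ((integrableOn_tnPdf μ₁).const_mul _),
    integral_const_mul, integral_const_mul, integral_mul_tnPdf, integral_tnPdf]
  ring
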